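/- arXiv:1612.07367 — 2 statements merged into one kernel-verified Lean document; each statement's English description precedes it below -/
import Mathlib

section
/- (Sufficiency direction of the safety lemma.) Let L be an r×n real matrix, p ∈ ℝⁿ, q ∈ ℝʳ. Suppose there exist an r×n matrix S and y ∈ ℝʳ such that: S ≥ 0 entrywise, L + S + y·1ᵀ ≥ 0 entrywise, and y + q ≥ (L + S + y·1ᵀ)·p componentwise. Then for every probability vector x ∈ ℝⁿ (x ≥ 0, 1ᵀx = 1) with x ≤ p componentwise, it holds that L·x ≤ q componentwise. -/
theorem stmt_9 {n r : ℕ} (L : Matrix (Fin r) (Fin n) ℝ) (p : Fin n → ℝ) (q : Fin r → ℝ)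
    (S : Matrix (Fin r) (Fin n) ℝ) (y : Fin r → ℝ)
    (hS : ∀ i j, 0 ≤ S i j)
    (hLSy : ∀ i j, 0 ≤ L i j + S i j + y i)
    (hyq : ∀ i, ∑ j, (L i j + S i j + y i) * p j ≤ y i + q i) :
    ∀ x : Fin n → ℝ, (∀ j, 0 ≤ x j) → (∑ j, x j = 1) → (∀ j, x j ≤ p j) →
      ∀ i, ∑ j, L i j * x j ≤ q i := by
  intro x hx hsum hxp i
  have h1 : ∑ j, (L i j + S i j + y i) * x j ≤ ∑ j, (L i j + S i j + y i) * p j :=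
    Finset.sum_le_sum fun j _ => mul_le_mul_of_nonneg_left (hxp j) (hLSy i j)
  have h2 : 0 ≤ ∑ j, S i j * x j :=
    Finset.sum_nonneg fun j _ => mul_nonneg (hS i j) (hx j)
  have expand : ∑ j, (L i j + S i j + y i) * x j
      = (∑ j, L i j * x j) + (∑ j, S i j * x j) + y i * ∑ j, x j := by
    rw [Finset.mul_sum, ← Finset.sum_add_distrib, ← Finset.sum_add_distrib]
    exact Finset.sum_congr rfl fun j _ => by ring
  rw [hsum, mul_one] at expand
  linarith [hyq i]
end

section
/- Let M be an n×n column stochastic matrix such that there exists ε > 0 with M[i,j] ≥ ε for all pairs (i,j), and suppose M·v = v for some probability vector v. Then v is the unique probability vector fixed by M, and for every probability vector x(0), the sequence x(t+1) = M·x(t) converges to v. -/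
open Filter

theorem stmt_13 {n : ℕ} (M : Matrix (Fin n) (Fin n) ℝ) (v : Fin n → ℝ)
    (ε : ℝ) (hε : 0 < ε) (hMε : ∀ i j, ε ≤ M i j)
    (hMcol : ∀ j, ∑ i, M i j = 1)
    (hvnn : ∀ i, 0 ≤ v i) (hvsum : ∑ i, v i = 1)
    (hMv : M.mulVec v = v) :
    (∀ w : Fin n → ℝ, (∀ i, 0 ≤ w i) → (∑ i, w i = 1) → M.mulVec w = w → w = v) ∧
    (∀ x : ℕ → Fin n → ℝ, (∀ i, 0 ≤ x 0 i) → (∑ i, x 0 i = 1) →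
      (∀ t, x (t + 1) = M.mulVec (x t)) → Tendsto x atTop (nhds v)) := by
  have hn : 0 < n := by
    rcases Nat.eq_zero_or_pos n with h | h
    · subst h; simp at hvsum
    · exact h
  set c : ℝ := 1 - n * ε with hcdef
  have hnε : (n : ℝ) * ε ≤ 1 := by
    have j : Fin n := ⟨0, hn⟩
    calc (n : ℝ) * ε = ∑ _i : Fin n, ε := by simp [mul_comm]
      _ ≤ ∑ i, M i j := Finset.sum_le_sum (fun i _ => hMε i j)
      _ = 1 := hMcol j
  have hc0 : 0 ≤ c := by simp [hcdef]; linarith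
  have hc1 : c < 1 := by
    have : 0 < (n : ℝ) * ε := by positivity
    simp [hcdef]; linarith
  -- mulVec preserves the sum of coordinates
  have hsum : ∀ d : Fin n → ℝ, ∑ i, M.mulVec d i = ∑ i, d i := by
    intro d
    simp only [Matrix.mulVec, dotProduct]
    rw [Finset.sum_comm]
    simp [← Finset.sum_mul, hMcol]
  -- key contraction estimate
  have key : ∀ d : Fin n → ℝ, (∑ i, d i = 0) →
      ∑ i, |M.mulVec d i| ≤ c * ∑ i, |d i| := by
    intro d hd
    have h1 : ∀ i, M.mulVec d i = ∑ j, (M i j - ε) * d j := by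
      intro i
      simp only [Matrix.mulVec, dotProduct, sub_mul,
        Finset.sum_sub_distrib, ← Finset.mul_sum, hd, mul_zero, sub_zero]
    calc ∑ i, |M.mulVec d i| ≤ ∑ i, ∑ j, (M i j - ε) * |d j| := by
          apply Finset.sum_le_sum; intro i _
          rw [h1]
          refine (Finset.abs_sum_le_sum_abs _ _).trans ?_
          apply Finset.sum_le_sum; intro j _
          rw [abs_mul, abs_of_nonneg (by linarith [hMε i j])]
      _ = ∑ j, c * |d j| := by
          rw [Finset.sum_comm]
          refine Finset.sum_congr rfl fun j _ => ?_
          rw [← Finset.sum_mul, Finset.sum_sub_distrib, hMcol j]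
          simp [hcdef, mul_comm]
      _ = c * ∑ j, |d j| := by rw [Finset.mul_sum]
  constructor
  · intro w _ hwsum hMw
    have hd : ∑ i, (w i - v i) = 0 := by
      rw [Finset.sum_sub_distrib, hwsum, hvsum]; ring
    have hMd : M.mulVec (fun i => w i - v i) = fun i => w i - v i := by
      have : (fun i => w i - v i) = w - v := rfl
      rw [this, Matrix.mulVec_sub, hMw, hMv]
    have h := key (fun i => w i - v i) hd
    rw [hMd] at h
    have hnn : 0 ≤ ∑ i, |w i - v i| :=
      Finset.sum_nonneg (fun i _ => abs_nonneg _)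
    have hz : ∑ i, |w i - v i| = 0 := by nlinarith
    funext i
    have := (Finset.sum_eq_zero_iff_of_nonneg
      (fun i _ => abs_nonneg (w i - v i))).mp hz i (Finset.mem_univ i)
    have : w i - v i = 0 := abs_eq_zero.mp this
    linarith
  · intro x _ hx0sum hrec
    -- sums of differences stay zero
    have hdsum : ∀ t, ∑ i, (x t i - v i) = 0 := by
      intro t
      induction t with
      | zero => rw [Finset.sum_sub_distrib, hx0sum, hvsum]; ring
      | succ t ih =>
        rw [Finset.sum_sub_distrib] at ih ⊢
        rw [hrec t, hsum]
        linarith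
    have hbound : ∀ t, ∑ i, |x t i - v i| ≤ c ^ t * ∑ i, |x 0 i - v i| := by
      intro t
      induction t with
      | zero => simp
      | succ t ih =>
        have hMd : (fun i => x (t + 1) i - v i)
            = M.mulVec (fun i => x t i - v i) := by
          have h2 : (fun i => x t i - v i) = x t - v := rfl
          rw [h2, Matrix.mulVec_sub, hMv, hrec t]
          rfl
        calc ∑ i, |x (t + 1) i - v i|
            = ∑ i, |M.mulVec (fun i => x t i - v i) i| :=
              Finset.sum_congr rfl fun i _ => by rw [congrFun hMd i]
          _ ≤ c * ∑ i, |x t i - v i| := key _ (hdsum t)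
          _ ≤ c * (c ^ t * ∑ i, |x 0 i - v i|) := by
              exact mul_le_mul_of_nonneg_left ih hc0
          _ = c ^ (t + 1) * ∑ i, |x 0 i - v i| := by ring
    rw [tendsto_pi_nhds]
    intro i
    rw [tendsto_iff_dist_tendsto_zero]
    have htz : Tendsto (fun t : ℕ => c ^ t * ∑ i, |x 0 i - v i|) atTop (nhds 0) := by
      have := (tendsto_pow_atTop_nhds_zero_of_lt_one hc0 hc1).mul_const
        (∑ i, |x 0 i - v i|)
      simpa using this
    apply squeeze_zero (fun t => dist_nonneg) _ htz
    intro t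
    rw [Real.dist_eq]
    calc |x t i - v i| ≤ ∑ j, |x t j - v j| :=
          Finset.single_le_sum (f := fun j => |x t j - v j|) (fun j _ => abs_nonneg _) (Finset.mem_univ i)
      _ ≤ c ^ t * ∑ i, |x 0 i - v i| := hbound t
end
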